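/- Fix i₀ ∈ [n] and j₀ ∈ [q], and fix δ ∈ ℝ^d, all dual variables other than λ_{i₀,j₀}, and all penalty parameters. Then the map λ_{i₀,j₀} ↦ L(δ, Λ, μ, P, p) is differentiable at every λ_{i₀,j₀} ∈ ℝ, with partial derivative ∂L/∂λ_{i₀,j₀} = ζ(δ, λ_{i₀,j₀}, ρ_{i₀,j₀}) = max{g_{j₀}(x_{i₀}+δ) − b_{j₀}, −λ_{i₀,j₀}/ρ_{i₀,j₀}}. -/

import Mathlib

/-!
Write `a = g_{j₀}(x_{i₀}+δ) − b_{j₀}` and `ρ = ρ_{i₀,j₀}`. Completing the square,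
`s · max a (−s/ρ) + ρ/2 · max a (−s/ρ)² = ρ/2 · max (a + s/ρ) 0² − s²/(2ρ)`,
and `u ↦ max u 0 ²` is differentiable with derivative `2 · max u 0`, so this summand of `L` has
derivative `max a (−s/ρ)` in `s`. All other summands of `L` do not depend on `λ_{i₀,j₀}`.
-/

open Filter Topology Function

theorem hasDerivAt_max_zero_sq (t : ℝ) :
    HasDerivAt (fun x : ℝ => max x 0 ^ 2) (2 * max t 0) t := by
  rcases lt_trichotomy t 0 with ht | rfl | ht
  · have hzero : (fun x : ℝ => max x 0 ^ 2) =ᶠ[𝓝 t] fun _ => 0 := by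
      filter_upwards [eventually_lt_nhds ht] with x hx
      simp [max_eq_right hx.le]
    simpa [max_eq_right ht.le] using (hasDerivAt_const t (0 : ℝ)).congr_of_eventuallyEq hzero
  · -- `max x 0 ^ 2` is squeezed between `0` and `x ^ 2 = o(x)`
    have hbound : (fun x : ℝ => max x 0 ^ 2) =O[𝓝 0] fun x => x ^ 2 :=
      Asymptotics.IsBigO.of_bound 1 <| Eventually.of_forall fun x => by
        rcases le_total x 0 with hx | hx
        · simp [max_eq_right hx, sq_nonneg]
        · simp [max_eq_left hx]
    simpa [hasDerivAt_iff_isLittleO_nhds_zero] using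
      hbound.trans_isLittleO (Asymptotics.isLittleO_pow_id one_lt_two)
  · have hid : (fun x : ℝ => max x 0 ^ 2) =ᶠ[𝓝 t] fun x => x ^ 2 := by
      filter_upwards [eventually_gt_nhds ht] with x hx
      rw [max_eq_left hx.le]
    simpa [max_eq_left ht.le] using (hasDerivAt_pow 2 t).congr_of_eventuallyEq hid

theorem hasDerivAt_sum_sum_update {𝕜 ι κ : Type*} [NontriviallyNormedField 𝕜]
    [Fintype ι] [Fintype κ] [DecidableEq ι] [DecidableEq κ]
    (h : ι → κ → 𝕜 → 𝕜) (Λ : ι → κ → 𝕜) (i₀ : ι) (j₀ : κ) {h' t : 𝕜}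
    (hd : HasDerivAt (h i₀ j₀) h' t) :
    HasDerivAt (fun s => ∑ i, ∑ j, h i j (update Λ i₀ (update (Λ i₀) j₀ s) i j)) h' t := by
  have hterm : ∀ i j, HasDerivAt (fun s => h i j (update Λ i₀ (update (Λ i₀) j₀ s) i j))
      (if i = i₀ then if j = j₀ then h' else 0 else 0) t := by
    intro i j
    by_cases hi : i = i₀
    · subst hi
      by_cases hj : j = j₀
      · subst hj
        simpa using hd
      · simpa [hj] using hasDerivAt_const t _
    · simpa [hi] using hasDerivAt_const t _
  simpa using HasDerivAt.fun_sum (u := Finset.univ) fun i _ =>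
    HasDerivAt.fun_sum (u := Finset.univ) fun j _ => hterm i j

noncomputable def augLagTerm (a ρ s : ℝ) : ℝ := s * max a (-s / ρ) + ρ / 2 * max a (-s / ρ) ^ 2

theorem max_add_div_zero (a ρ s : ℝ) : max (a + s / ρ) 0 = max a (-s / ρ) + s / ρ := by
  rw [← max_add_add_right]; ring_nf

theorem augLagTerm_eq {ρ : ℝ} (a : ℝ) (hρ : ρ ≠ 0) (s : ℝ) :
    augLagTerm a ρ s = ρ / 2 * max (a + s / ρ) 0 ^ 2 - s ^ 2 / (2 * ρ) := by
  rw [augLagTerm, max_add_div_zero]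
  field_simp
  ring

theorem hasDerivAt_augLagTerm {ρ : ℝ} (a : ℝ) (hρ : ρ ≠ 0) (t : ℝ) :
    HasDerivAt (augLagTerm a ρ) (max a (-t / ρ)) t := by
  have hinner : HasDerivAt (fun s : ℝ => a + s / ρ) (1 / ρ) t := by
    simpa using ((hasDerivAt_id t).div_const ρ).const_add a
  have hpow : HasDerivAt (fun s : ℝ => s ^ 2) (2 * t) t := by
    simpa using hasDerivAt_pow 2 t
  have hsq := ((hasDerivAt_max_zero_sq _).comp t hinner).const_mul (ρ / 2) |>.sub
    (hpow.div_const (2 * ρ))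
  have hderiv : ρ / 2 * (2 * max (a + t / ρ) 0 * (1 / ρ)) - 2 * t / (2 * ρ) = max a (-t / ρ) := by
    rw [max_add_div_zero]
    field_simp
    ring
  exact (hsq.congr_deriv hderiv).congr_of_eventuallyEq
    (Eventually.of_forall (augLagTerm_eq a hρ))

theorem stmt_1_general {d n q : ℕ}
    (x : Fin n → EuclideanSpace ℝ (Fin d)) (y : ℝ)
    (f : EuclideanSpace ℝ (Fin d) → ℝ)
    (g : Fin q → EuclideanSpace ℝ (Fin d) → ℝ)
    (b : Fin q → ℝ) (c : ℝ)
    (δ : EuclideanSpace ℝ (Fin d))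
    (Λ : Fin n → Fin q → ℝ) (μ : Fin n → ℝ)
    (P : Fin n → Fin q → ℝ) (hP : ∀ i j, 0 < P i j)
    (p : Fin n → ℝ)
    (L : (Fin n → Fin q → ℝ) → ℝ)
    (hL : ∀ Λ' : Fin n → Fin q → ℝ,
      L Λ' = (1 / 2) * ‖δ‖ ^ 2
        + ∑ i, ∑ j, Λ' i j * max (g j (x i + δ) - b j) (-Λ' i j / P i j)
        + ∑ i, μ i * max (y * f (x i + δ) - c) (-μ i / p i)
        + (1 / 2) * ∑ i, ∑ j, P i j * (max (g j (x i + δ) - b j) (-Λ' i j / P i j)) ^ 2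
        + (1 / 2) * ∑ i, p i * (max (y * f (x i + δ) - c) (-μ i / p i)) ^ 2)
    (i₀ : Fin n) (j₀ : Fin q) :
    ∀ t : ℝ, HasDerivAt
      (fun s : ℝ => L (Function.update Λ i₀ (Function.update (Λ i₀) j₀ s)))
      (max (g j₀ (x i₀ + δ) - b j₀) (-t / P i₀ j₀)) t := by
  intro t
  set K := (1 / 2) * ‖δ‖ ^ 2 + ∑ i, μ i * max (y * f (x i + δ) - c) (-μ i / p i)
    + (1 / 2) * ∑ i, p i * (max (y * f (x i + δ) - c) (-μ i / p i)) ^ 2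
  have hsplit : ∀ Λ', L Λ' = K + ∑ i, ∑ j, augLagTerm (g j (x i + δ) - b j) (P i j) (Λ' i j) := by
    intro Λ'
    simp only [hL, K, augLagTerm, Finset.mul_sum, Finset.sum_add_distrib]
    ring_nf
  simp only [hsplit]
  exact (hasDerivAt_sum_sum_update (fun i j => augLagTerm (g j (x i + δ) - b j) (P i j)) Λ i₀ j₀
    (hasDerivAt_augLagTerm _ (hP i₀ j₀).ne' t)).const_add K

/-- Dual gradient of the universal augmented Lagrangian with respect to a single dual
variable `λ_{i₀,j₀}`: fixing `δ`, all other dual variables, and all penalty parameters, the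
map `λ_{i₀,j₀} ↦ L(δ, Λ, μ, P, p)` is differentiable at every point `t ∈ ℝ` with derivative
`ζ(δ, t, ρ_{i₀,j₀}) = max{g_{j₀}(x_{i₀}+δ) − b_{j₀}, −t/ρ_{i₀,j₀}}`. -/
theorem stmt_1 {d n q : ℕ}
    (x : Fin n → EuclideanSpace ℝ (Fin d)) (y : ℝ) (hy : y = 1 ∨ y = -1)
    (f : EuclideanSpace ℝ (Fin d) → ℝ)
    (g : Fin q → EuclideanSpace ℝ (Fin d) → ℝ)
    (b : Fin q → ℝ) (c : ℝ)
    (δ : EuclideanSpace ℝ (Fin d))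
    (Λ : Fin n → Fin q → ℝ) (μ : Fin n → ℝ)
    (P : Fin n → Fin q → ℝ) (hP : ∀ i j, 0 < P i j)
    (p : Fin n → ℝ) (hp : ∀ i, 0 < p i)
    (L : (Fin n → Fin q → ℝ) → ℝ)
    (hL : ∀ Λ' : Fin n → Fin q → ℝ,
      L Λ' = (1 / 2) * ‖δ‖ ^ 2
        + ∑ i, ∑ j, Λ' i j * max (g j (x i + δ) - b j) (-Λ' i j / P i j)
        + ∑ i, μ i * max (y * f (x i + δ) - c) (-μ i / p i)
        + (1 / 2) * ∑ i, ∑ j, P i j * (max (g j (x i + δ) - b j) (-Λ' i j / P i j)) ^ 2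
        + (1 / 2) * ∑ i, p i * (max (y * f (x i + δ) - c) (-μ i / p i)) ^ 2)
    (i₀ : Fin n) (j₀ : Fin q) :
    ∀ t : ℝ, HasDerivAt
      (fun s : ℝ => L (Function.update Λ i₀ (Function.update (Λ i₀) j₀ s)))
      (max (g j₀ (x i₀ + δ) - b j₀) (-t / P i₀ j₀)) t :=
  stmt_1_general x y f g b c δ Λ μ P hP p L hL i₀ j₀
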